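/- Let P ∈ ℝ^{d×d} be a symmetric matrix such that P ≠ a⊙b for all a, b ∈ ℝ^d. Then there exists a constant C > 0 such that for all a ∈ ℂ^d and all ξ ∈ ℝ^d, ‖a⊙ξ‖ ≤ C ‖𝐏(a⊙ξ)‖, where 𝐏(M) := M − (⟨M, P⟩/‖P‖²) P is the (complexified) orthogonal projection of M ∈ ℂ^{d×d} onto the orthogonal complement of the complex span of P with respect to the Frobenius inner product ⟨M, N⟩ = Σ_{ij} M_{ij} conj(N_{ij}), and ‖·‖ is the Frobenius norm. -/

import Mathlib

/-!
Both `‖a ⊙ ξ‖` and `‖𝐏(a ⊙ ξ)‖` are continuous and positively homogeneous of degree one in `a`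
and in `ξ` separately, so it suffices to compare them on the compact set of pairs of unit
vectors, where the second one must be shown positive. If `𝐏(a ⊙ ξ) = 0` then `a ⊙ ξ = c P` for
some `c ∈ ℂ`, and `c ≠ 0` when `a, ξ ≠ 0`; the real part of `(a / c) ⊙ ξ = P` then writes `P` as
the real symmetric tensor product `Re (a / c) ⊙ ξ`, which is excluded.
-/

/-- The symmetric tensor product `a ⊙ b := (a ⊗ b + b ⊗ a)/2` of real vectors. -/
noncomputable def symTensor {d : ℕ} (a b : Fin d → ℝ) : Matrix (Fin d) (Fin d) ℝ :=
  fun i j => (a i * b j + b i * a j) / 2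

/-- The symmetric tensor product `a ⊙ ξ ∈ ℂ^{d×d}` of `a ∈ ℂ^d` and `ξ ∈ ℝ^d`. -/
noncomputable def symTensorC {d : ℕ} (a : Fin d → ℂ) (ξ : Fin d → ℝ) :
    Matrix (Fin d) (Fin d) ℂ :=
  fun i j => (a i * (ξ j : ℂ) + (ξ i : ℂ) * a j) / 2

/-- The Frobenius norm of a complex matrix. -/
noncomputable def frobC {d : ℕ} (M : Matrix (Fin d) (Fin d) ℂ) : ℝ :=
  Real.sqrt (∑ i, ∑ j, ‖M i j‖ ^ 2)

/-- The (complexified) orthogonal projection of `ℂ^{d×d}` onto the orthogonal complement of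
the complex span of the real matrix `P` w.r.t. the Frobenius inner product
`⟨M, N⟩ = Σ_{ij} M_{ij} conj(N_{ij})` (note `conj (P i j) = P i j` as `P` is real). -/
noncomputable def projPerp {d : ℕ} (P : Matrix (Fin d) (Fin d) ℝ)
    (M : Matrix (Fin d) (Fin d) ℂ) : Matrix (Fin d) (Fin d) ℂ :=
  M - ((∑ i, ∑ j, M i j * ((P i j : ℝ) : ℂ)) / (((∑ i, ∑ j, (P i j) ^ 2 : ℝ) : ℂ))) •
        P.map (fun t => (t : ℂ))

theorem IsCompact.exists_pos_forall_le_mul {X : Type*} [TopologicalSpace X] {K : Set X}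
    (hK : IsCompact K) {f g : X → ℝ} (hf : ContinuousOn f K) (hg : ContinuousOn g K)
    (hg_pos : ∀ x ∈ K, 0 < g x) : ∃ C > 0, ∀ x ∈ K, f x ≤ C * g x := by
  obtain ⟨M, hM⟩ := hK.exists_bound_of_continuousOn (hf.div hg fun x hx => (hg_pos x hx).ne')
  refine ⟨max M 1, by positivity, fun x hx => ?_⟩
  have hgx := hg_pos x hx
  calc f x = f x / g x * g x := (div_mul_cancel₀ _ hgx.ne').symm
    _ ≤ ‖f x / g x‖ * g x := by gcongr; exact Real.le_norm_self _
    _ ≤ max M 1 * g x := by gcongr; exact (hM x hx).trans (le_max_left _ _)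

section Bihomogeneous

variable {E F : Type*} [NormedAddCommGroup E] [NormedSpace ℝ E]
  [NormedAddCommGroup F] [NormedSpace ℝ F]

def IsBihomogeneous (f : E → F → ℝ) : Prop :=
  ∀ (s t : ℝ), 0 < s → 0 < t → ∀ x y, f (s • x) (t • y) = s * t * f x y

namespace IsBihomogeneous

variable {f : E → F → ℝ}

theorem apply_zero_left (hf : IsBihomogeneous f) (y : F) : f 0 y = 0 := by
  have h := hf 2 1 two_pos one_pos 0 y
  rw [smul_zero, one_smul] at h
  linarith

theorem apply_zero_right (hf : IsBihomogeneous f) (x : E) : f x 0 = 0 := by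
  have h := hf 1 2 one_pos two_pos x 0
  rw [smul_zero, one_smul] at h
  linarith

theorem apply_eq_norm_mul_norm_mul {x : E} {y : F} (hf : IsBihomogeneous f) (hx : x ≠ 0)
    (hy : y ≠ 0) : f x y = ‖x‖ * ‖y‖ * f (‖x‖⁻¹ • x) (‖y‖⁻¹ • y) := by
  have hx' := norm_pos_iff.2 hx
  have hy' := norm_pos_iff.2 hy
  rw [hf _ _ (inv_pos.2 hx') (inv_pos.2 hy'), ← mul_assoc, mul_mul_mul_comm,
    mul_inv_cancel₀ hx'.ne', mul_inv_cancel₀ hy'.ne', one_mul, one_mul]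

variable [ProperSpace E] [ProperSpace F]

theorem exists_pos_le_mul {g : E → F → ℝ} (hf : IsBihomogeneous f) (hg : IsBihomogeneous g)
    (hf_cont : Continuous (Function.uncurry f)) (hg_cont : Continuous (Function.uncurry g))
    (hg_pos : ∀ x y, x ≠ 0 → y ≠ 0 → 0 < g x y) : ∃ C > 0, ∀ x y, f x y ≤ C * g x y := by
  have hK := (isCompact_sphere (0 : E) 1).prod (isCompact_sphere (0 : F) 1)
  obtain ⟨C, hC, hCK⟩ := hK.exists_pos_forall_le_mul hf_cont.continuousOn hg_cont.continuousOn
    fun p hp => hg_pos p.1 p.2 (ne_zero_of_mem_unit_sphere ⟨p.1, hp.1⟩)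
      (ne_zero_of_mem_unit_sphere ⟨p.2, hp.2⟩)
  refine ⟨C, hC, fun x y => ?_⟩
  rcases eq_or_ne x 0 with rfl | hx
  · rw [hf.apply_zero_left, hg.apply_zero_left, mul_zero]
  rcases eq_or_ne y 0 with rfl | hy
  · rw [hf.apply_zero_right, hg.apply_zero_right, mul_zero]
  have hunit : (‖x‖⁻¹ • x, ‖y‖⁻¹ • y) ∈ Metric.sphere (0 : E) 1 ×ˢ Metric.sphere (0 : F) 1 := by
    constructor <;> simp [norm_smul, hx, hy]
  rw [hf.apply_eq_norm_mul_norm_mul hx hy, hg.apply_eq_norm_mul_norm_mul hx hy, mul_left_comm]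
  exact mul_le_mul_of_nonneg_left (hCK _ hunit) (by positivity)

end IsBihomogeneous

end Bihomogeneous

section Ellipticity

variable {d : ℕ}

theorem frobC_smul (z : ℂ) (M : Matrix (Fin d) (Fin d) ℂ) : frobC (z • M) = ‖z‖ * frobC M := by
  simp_rw [frobC, Matrix.smul_apply, smul_eq_mul, norm_mul, mul_pow, ← Finset.mul_sum]
  rw [Real.sqrt_mul (by positivity), Real.sqrt_sq (norm_nonneg _)]

theorem frobC_pos {M : Matrix (Fin d) (Fin d) ℂ} (hM : M ≠ 0) : 0 < frobC M := by
  obtain ⟨i, j, hij⟩ : ∃ i j, M i j ≠ 0 := by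
    by_contra! h
    exact hM (Matrix.ext h)
  refine Real.sqrt_pos.2 (Finset.sum_pos' (fun i _ => by positivity) ⟨i, Finset.mem_univ _, ?_⟩)
  exact Finset.sum_pos' (fun j _ => by positivity) ⟨j, Finset.mem_univ _, by positivity⟩

theorem continuous_frobC : Continuous (frobC : Matrix (Fin d) (Fin d) ℂ → ℝ) := by
  unfold frobC
  fun_prop

theorem continuous_symTensorC :
    Continuous fun p : (Fin d → ℂ) × (Fin d → ℝ) => symTensorC p.1 p.2 := by
  refine continuous_pi fun i => continuous_pi fun j => ?_
  unfold symTensorC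
  fun_prop

theorem continuous_projPerp (P : Matrix (Fin d) (Fin d) ℝ) : Continuous (projPerp P) := by
  unfold projPerp
  fun_prop

theorem symTensorC_smul_smul (s t : ℝ) (a : Fin d → ℂ) (ξ : Fin d → ℝ) :
    symTensorC (s • a) (t • ξ) = ((s * t : ℝ) : ℂ) • symTensorC a ξ := by
  ext i j
  simp only [symTensorC, Pi.smul_apply, Matrix.smul_apply, Complex.real_smul, smul_eq_mul]
  push_cast
  ring

theorem projPerp_smul (P : Matrix (Fin d) (Fin d) ℝ) (z : ℂ) (M : Matrix (Fin d) (Fin d) ℂ) :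
    projPerp P (z • M) = z • projPerp P M := by
  simp only [projPerp, Matrix.smul_apply, smul_eq_mul, mul_assoc, ← Finset.mul_sum, mul_div_assoc,
    smul_sub, smul_smul]

theorem isBihomogeneous_frobC_comp_symTensorC
    {L : Matrix (Fin d) (Fin d) ℂ → Matrix (Fin d) (Fin d) ℂ}
    (hL : ∀ (z : ℂ) M, L (z • M) = z • L M) :
    IsBihomogeneous fun a ξ => frobC (L (symTensorC a ξ)) := by
  intro s t hs ht a ξ
  dsimp only
  rw [symTensorC_smul_smul, hL, frobC_smul, Complex.norm_real, Real.norm_of_nonneg (by positivity)]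

theorem symTensorC_ne_zero {a : Fin d → ℂ} {ξ : Fin d → ℝ} (ha : a ≠ 0) (hξ : ξ ≠ 0) :
    symTensorC a ξ ≠ 0 := by
  intro h
  obtain ⟨k, hk⟩ := Function.ne_iff.1 hξ
  have hkC : (ξ k : ℂ) ≠ 0 := by exact_mod_cast hk
  have entry i j : (a i * ξ j + ξ i * a j) / 2 = 0 := congrFun (congrFun h i) j
  have hak : a k = 0 := by
    refine (mul_eq_zero.1 ?_).resolve_right hkC
    linear_combination entry k k
  refine ha (funext fun i => (mul_eq_zero.1 ?_).resolve_right hkC)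
  linear_combination 2 * entry i k - (ξ i : ℂ) * hak

theorem eq_symTensor_of_symTensorC_eq_smul {P : Matrix (Fin d) (Fin d) ℝ} {a : Fin d → ℂ}
    {ξ : Fin d → ℝ} {c : ℂ} (hc : c ≠ 0) (h : symTensorC a ξ = c • P.map (↑)) :
    P = symTensor (fun i => (a i / c).re) ξ := by
  ext i j
  have hij : (a i / c * ξ j + ξ i * (a j / c)) / 2 = P i j := by
    have := congrFun (congrFun h i) j
    simp only [symTensorC, Matrix.smul_apply, Matrix.map_apply, smul_eq_mul] at this
    calc (a i / c * ξ j + ξ i * (a j / c)) / 2 = (a i * ξ j + ξ i * a j) / 2 / c := by ring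
      _ = P i j := by rw [this, mul_div_cancel_left₀ _ hc]
  simpa [symTensor] using congrArg Complex.re hij.symm

theorem projPerp_symTensorC_ne_zero {P : Matrix (Fin d) (Fin d) ℝ}
    (hP : ∀ a b : Fin d → ℝ, P ≠ symTensor a b) {a : Fin d → ℂ} {ξ : Fin d → ℝ}
    (h : symTensorC a ξ ≠ 0) : projPerp P (symTensorC a ξ) ≠ 0 := by
  intro h0
  set c : ℂ :=
    (∑ i, ∑ j, symTensorC a ξ i j * ((P i j : ℝ) : ℂ)) / ((∑ i, ∑ j, P i j ^ 2 : ℝ) : ℂ)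
  have hM : symTensorC a ξ = c • P.map (↑) := sub_eq_zero.1 h0
  have hc : c ≠ 0 := by
    rintro hc
    rw [hc, zero_smul] at hM
    exact h hM
  exact hP _ _ (eq_symTensor_of_symTensorC_eq_smul hc hM)

end Ellipticity

theorem ellipticity_estimate_general {d : ℕ} (P : Matrix (Fin d) (Fin d) ℝ)
    (hPnot : ∀ a b : Fin d → ℝ, P ≠ symTensor a b) :
    ∃ C > 0, ∀ (a : Fin d → ℂ) (ξ : Fin d → ℝ),
      frobC (symTensorC a ξ) ≤ C * frobC (projPerp P (symTensorC a ξ)) :=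
  IsBihomogeneous.exists_pos_le_mul
    (isBihomogeneous_frobC_comp_symTensorC (L := id) fun _ _ => rfl)
    (isBihomogeneous_frobC_comp_symTensorC (projPerp_smul P))
    (continuous_frobC.comp continuous_symTensorC)
    ((continuous_frobC.comp (continuous_projPerp P)).comp continuous_symTensorC)
    fun _ _ ha hξ => frobC_pos (projPerp_symTensorC_ne_zero hPnot (symTensorC_ne_zero ha hξ))

/-- Ellipticity estimate: if the symmetric matrix `P` is not a symmetric tensor product
`a ⊙ b`, then there is `C > 0` with `‖a ⊙ ξ‖ ≤ C ‖𝐏(a ⊙ ξ)‖` for all `a ∈ ℂ^d`,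
`ξ ∈ ℝ^d`, where `𝐏` is the orthogonal projection onto `(span_ℂ P)ᗮ`. -/
theorem ellipticity_estimate {d : ℕ} (P : Matrix (Fin d) (Fin d) ℝ) (hP : P.IsSymm)
    (hPnot : ∀ a b : Fin d → ℝ, P ≠ symTensor a b) :
    ∃ C > 0, ∀ (a : Fin d → ℂ) (ξ : Fin d → ℝ),
      frobC (symTensorC a ξ) ≤ C * frobC (projPerp P (symTensorC a ξ)) :=
  ellipticity_estimate_general P hPnot
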